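/- Let G be a finite simple graph, let c be an edge colouring of G, let κ be a colour, and let X and Y be disjoint sets of vertices of G such that every edge of colour κ with at least one endpoint in Y has its other endpoint in X. Let D > 0 and 0 < ε ≤ 1 be real numbers. If every vertex v ∈ Y satisfies d_κ(v) ≥ (1 + 3ε/4)·D and every vertex u ∈ X satisfies d_κ(u) ≤ (1 + ε/4)·D, then |X| ≥ (1 + ε/4)·|Y|. -/

import Mathlib

open Finset

/-- The number of edges of colour `κ` incident to the vertex `v`
(in a simple graph, with an edge colouring `c`, not necessarily proper). -/
def colDeg {V : Type*} [Fintype V] [DecidableEq V] (G : SimpleGraph V) [DecidableRel G.Adj]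
    (c : Sym2 V → ℕ) (κ : ℕ) (v : V) : ℕ :=
  ((G.neighborFinset v).filter (fun u => c s(v, u) = κ)).card

/-!
Double counting the `κ`-coloured edges between `Y` and `X`: all of them leave `Y` towards `X`,
so `|Y|·(1 + 3ε/4)·D ≤ #edges ≤ |X|·(1 + ε/4)·D`. Dividing by `D` and using
`(1 + ε/4)² ≤ 1 + 3ε/4`, valid for `0 ≤ ε ≤ 4`, gives `(1 + ε/4)·|Y| ≤ |X|`.
-/

section ColDeg

variable {V : Type*} [Fintype V] [DecidableEq V] {G : SimpleGraph V} [DecidableRel G.Adj]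
  {c : Sym2 V → ℕ} {κ : ℕ}

theorem card_bipartiteBelow_le_colDeg (Y : Finset V) (u : V) :
    #(Y.bipartiteBelow (fun v w => G.Adj v w ∧ c s(v, w) = κ) u) ≤ colDeg G c κ u := by
  refine card_le_card fun v hv => ?_
  obtain ⟨-, hadj, hc⟩ := mem_bipartiteBelow _ |>.mp hv
  exact mem_filter.mpr ⟨(G.mem_neighborFinset u v).mpr hadj.symm, by rwa [Sym2.eq_swap]⟩

theorem colDeg_eq_card_bipartiteAbove {X : Finset V} {v : V}
    (hX : ∀ u, G.Adj v u → c s(v, u) = κ → u ∈ X) :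
    colDeg G c κ v = #(X.bipartiteAbove (fun v w => G.Adj v w ∧ c s(v, w) = κ) v) := by
  rw [colDeg]
  congr 1
  ext u
  simp only [mem_filter, SimpleGraph.mem_neighborFinset, mem_bipartiteAbove]
  exact ⟨fun ⟨hadj, hc⟩ => ⟨hX u hadj hc, hadj, hc⟩, fun ⟨_, h⟩ => h⟩

theorem card_nsmul_le_card_nsmul_of_colDeg {R : Type*} [Semiring R] [PartialOrder R]
    [IsOrderedRing R] {X Y : Finset V} {m n : R}
    (hYX : ∀ v ∈ Y, ∀ u, G.Adj v u → c s(v, u) = κ → u ∈ X)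
    (hY : ∀ v ∈ Y, m ≤ colDeg G c κ v) (hX : ∀ u ∈ X, (colDeg G c κ u : R) ≤ n) :
    #Y • m ≤ #X • n :=
  card_nsmul_le_card_nsmul (fun v w => G.Adj v w ∧ c s(v, w) = κ)
    (fun v hv => colDeg_eq_card_bipartiteAbove (hYX v hv) ▸ hY v hv)
    (fun u hu => (Nat.mono_cast (card_bipartiteBelow_le_colDeg Y u)).trans (hX u hu))

end ColDeg

theorem expansion_between_general {V : Type*} [Fintype V] [DecidableEq V]
    (G : SimpleGraph V) [DecidableRel G.Adj]
    (c : Sym2 V → ℕ) (κ : ℕ) (X Y : Finset V) (D ε : ℝ)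
    (hD : 0 < D) (hε0 : 0 < ε) (hε : ε ≤ 1)
    (hedge : ∀ u v, G.Adj u v → c s(u, v) = κ → v ∈ Y → u ∈ X)
    (ha : ∀ v ∈ Y, (1 + 3 * ε / 4) * D ≤ (colDeg G c κ v : ℝ))
    (hb : ∀ u ∈ X, (colDeg G c κ u : ℝ) ≤ (1 + ε / 4) * D) :
    (1 + ε / 4) * Y.card ≤ (X.card : ℝ) := by
  have hYX : ∀ v ∈ Y, ∀ u, G.Adj v u → c s(v, u) = κ → u ∈ X := fun v hv u hadj hc =>
    hedge u v hadj.symm (by rwa [Sym2.eq_swap]) hv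
  have hcount := card_nsmul_le_card_nsmul_of_colDeg hYX ha hb
  simp only [nsmul_eq_mul] at hcount
  have hcancel : (1 + 3 * ε / 4) * #Y ≤ (1 + ε / 4) * #X :=
    le_of_mul_le_mul_right (by linarith) hD
  have hsq : (1 + ε / 4) * (1 + ε / 4) ≤ 1 + 3 * ε / 4 := by nlinarith
  have hY : (0 : ℝ) ≤ #Y := Nat.cast_nonneg _
  refine le_of_mul_le_mul_left ?_ (by linarith : (0 : ℝ) < 1 + ε / 4)
  nlinarith

/-- If every `κ`-coloured edge with an endpoint in `Y` has its other endpoint in the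
disjoint set `X`, every vertex of `Y` has `κ`-degree at least `(1 + 3ε/4)·D`, and every
vertex of `X` has `κ`-degree at most `(1 + ε/4)·D`, then `|X| ≥ (1 + ε/4)·|Y|`. -/
theorem expansion_between {V : Type*} [Fintype V] [DecidableEq V]
    (G : SimpleGraph V) [DecidableRel G.Adj]
    (c : Sym2 V → ℕ) (κ : ℕ) (X Y : Finset V) (D ε : ℝ)
    (hD : 0 < D) (hε0 : 0 < ε) (hε : ε ≤ 1)
    (hdisj : Disjoint X Y)
    (hedge : ∀ u v, G.Adj u v → c s(u, v) = κ → v ∈ Y → u ∈ X)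
    (ha : ∀ v ∈ Y, (1 + 3 * ε / 4) * D ≤ (colDeg G c κ v : ℝ))
    (hb : ∀ u ∈ X, (colDeg G c κ u : ℝ) ≤ (1 + ε / 4) * D) :
    (1 + ε / 4) * Y.card ≤ (X.card : ℝ) :=
  expansion_between_general G c κ X Y D ε hD hε0 hε hedge ha hb
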